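/- Let C₁,…,C₁₄ be the fourteen explicit 7×7 real matrices: C₁ = −E₄₇ − E₅₆ + E₆₅ + E₇₄; C₂ = E₄₆ − E₅₇ − E₆₄ + E₇₅; C₃ = −E₄₅ + E₅₄ − E₆₇ + E₇₆; C₄ = E₂₇ + E₃₆ − E₆₃ − E₇₂; C₅ = −E₂₆ + E₃₇ + E₆₂ − E₇₃; C₆ = E₂₅ − E₃₄ + E₄₃ − E₅₂; C₇ = −E₂₄ − E₃₅ + E₄₂ + E₅₃; C₈ = (1/√3)(−2E₂₃ + 2E₃₂ + E₄₅ − E₅₄ − E₆₇ + E₇₆); C₉ = (1/√3)(−2E₁₂ + 2E₂₁ + E₄₇ − E₅₆ + E₆₅ − E₇₄); C₁₀ = (1/√3)(−2E₁₃ + 2E₃₁ − E₄₆ − E₅₇ + E₆₄ + E₇₅); C₁₁ = (1/√3)(−2E₁₄ − E₂₇ + E₃₆ + 2E₄₁ − E₆₃ + E₇₂); C₁₂ = (1/√3)(−2E₁₅ + E₂₆ + E₃₇ + 2E₅₁ − E₆₂ − E₇₃); C₁₃ = (1/√3)(−2E₁₆ − E₂₅ − E₃₄ + E₄₃ + E₅₂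 + 2E₆₁); C₁₄ = (1/√3)(−2E₁₇ + E₂₄ − E₃₅ − E₄₂ + E₅₃ + 2E₇₁). Then the matrices C₁,…,C₁₄ are linearly independent over ℝ, their real span is closed under the matrix commutator ⁅X,Y⁆ = XY − YX (hence is a 14-dimensional real Lie subalgebra of the 7×7 real matrices, the compact Lie algebra g₂ in its 7-dimensional representation), and the Killing form of this Lie algebra is negative definite. -/

import Mathlib

open Matrix

attribute [local instance 100] LieRing.ofAssociativeRing

/-- `E i j` is the 7×7 real matrix with a single 1 in position `(i,j)` (0-indexed). -/
def E7 (i j : Fin 7) : Matrix (Fin 7) (Fin 7) ℝ := Matrix.single i j 1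

/-- The fourteen generators of the compact Lie algebra `g₂` in its 7-dimensional
representation (indices shifted to be 0-based). -/
noncomputable def g2C : Fin 14 → Matrix (Fin 7) (Fin 7) ℝ :=
  ![-E7 3 6 - E7 4 5 + E7 5 4 + E7 6 3,
    E7 3 5 - E7 4 6 - E7 5 3 + E7 6 4,
    -E7 3 4 + E7 4 3 - E7 5 6 + E7 6 5,
    E7 1 6 + E7 2 5 - E7 5 2 - E7 6 1,
    -E7 1 5 + E7 2 6 + E7 5 1 - E7 6 2,
    E7 1 4 - E7 2 3 + E7 3 2 - E7 4 1,
    -E7 1 3 - E7 2 4 + E7 3 1 + E7 4 2,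
    (1 / Real.sqrt 3) • (-(2 : ℝ) • E7 1 2 + (2 : ℝ) • E7 2 1 + E7 3 4 - E7 4 3 - E7 5 6 + E7 6 5),
    (1 / Real.sqrt 3) • (-(2 : ℝ) • E7 0 1 + (2 : ℝ) • E7 1 0 + E7 3 6 - E7 4 5 + E7 5 4 - E7 6 3),
    (1 / Real.sqrt 3) • (-(2 : ℝ) • E7 0 2 + (2 : ℝ) • E7 2 0 - E7 3 5 - E7 4 6 + E7 5 3 + E7 6 4),
    (1 / Real.sqrt 3) • (-(2 : ℝ) • E7 0 3 - E7 1 6 + E7 2 5 + (2 : ℝ) • E7 3 0 - E7 5 2 + E7 6 1),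
    (1 / Real.sqrt 3) • (-(2 : ℝ) • E7 0 4 + E7 1 5 + E7 2 6 + (2 : ℝ) • E7 4 0 - E7 5 1 - E7 6 2),
    (1 / Real.sqrt 3) • (-(2 : ℝ) • E7 0 5 - E7 1 4 - E7 2 3 + E7 3 2 + E7 4 1 + (2 : ℝ) • E7 5 0),
    (1 / Real.sqrt 3) • (-(2 : ℝ) • E7 0 6 + E7 1 3 - E7 2 4 - E7 3 1 + E7 4 2 + (2 : ℝ) • E7 6 0)]

/-!
The matrices are trace-orthogonal, `trace (Cᵢ * Cⱼ) = -4 δᵢⱼ`, which gives linear independence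
and reads coordinates off as traces. They are derivations of the cross product on `ℝ⁷ = Im 𝕆`,
and together with the seven matrices `Fᵥ : u ↦ v × u` they form an orthogonal basis of `so(7)`.
Being derivations means `⁅Cᵢ, Fᵥ⁆ = F_{Cᵢ v}`, so the span of the `Fᵥ` is stable under brackets
with the `Cᵢ`; by invariance of the trace form its orthogonal complement in `so(7)`, the span of
the `Cᵢ`, is then closed under brackets.

In the orthogonal basis, `κ(x, x) = ¼ ∑ⱼ trace (⁅x, Cⱼ⁆ ^ 2)`, and each term is `≤ 0` because
`⁅x, Cⱼ⁆` is skew-symmetric, with equality only when `x` commutes with every `Cⱼ`. A skew matrix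
commuting with `C₁` and `C₄` maps `e₁` into their common kernel `ℝ e₁`, so it kills `e₁`; as
`C₉, …, C₁₄` map `e₁` to nonzero multiples of `e₂, …, e₇`, it then kills every `eⱼ`.
-/

open Submodule LieAlgebra.Orthogonal

theorem LinearMap.apply_mem_of_mem_span {R M N P : Type*} [CommSemiring R] [AddCommMonoid M]
    [AddCommMonoid N] [AddCommMonoid P] [Module R M] [Module R N] [Module R P]
    (f : M →ₗ[R] N →ₗ[R] P) {s : Set M} {t : Set N} {W : Submodule R P}
    (h : ∀ m ∈ s, ∀ n ∈ t, f m n ∈ W) {m : M} {n : N} (hm : m ∈ span R s) (hn : n ∈ span R t) :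
    f m n ∈ W := by
  refine map₂_le.1 ?_ m hm n hn
  rw [map₂_span_span, span_le]
  rintro _ ⟨a, ha, b, hb, rfl⟩
  exact h a ha b hb

section TraceForm

variable {n R : Type*} [Fintype n] [DecidableEq n] [CommRing R]

theorem Matrix.trace_lie_mul (A B C : Matrix n n R) :
    trace (⁅A, B⁆ * C) = trace (A * ⁅B, C⁆) := by
  simp only [Ring.lie_def, sub_mul, mul_sub, trace_sub, mul_assoc]
  rw [trace_mul_comm B (A * C), mul_assoc]

theorem Matrix.lie_mem_of_mem_span {s t : Set (Matrix n n R)} {W : Submodule R (Matrix n n R)}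
    (h : ∀ A ∈ s, ∀ B ∈ t, ⁅A, B⁆ ∈ W) {A B : Matrix n n R} (hA : A ∈ span R s)
    (hB : B ∈ span R t) : ⁅A, B⁆ ∈ W := by
  simpa using (LieAlgebra.ad R (Matrix n n R)).toLinearMap.apply_mem_of_mem_span
    (by simpa using h) hA hB

theorem Matrix.trace_mul_eq_zero_of_mem_span {s t : Set (Matrix n n R)}
    (h : ∀ A ∈ s, ∀ B ∈ t, trace (A * B) = 0) {A B : Matrix n n R} (hA : A ∈ span R s)
    (hB : B ∈ span R t) : trace (A * B) = 0 :=
  (mem_bot R).1 <|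
    ((LinearMap.mul R (Matrix n n R)).compr₂ (traceLinearMap n R R)).apply_mem_of_mem_span
      (W := ⊥) (fun A hA B hB => (mem_bot R).2 (h A hA B hB)) hA hB

theorem Matrix.trace_mul_self_eq_neg_sum_sq {A : Matrix n n R} (hA : A ∈ so n R) :
    trace (A * A) = -∑ i, ∑ j, A i j ^ 2 := by
  have hji (i j : n) : A j i = -A i j := by
    simpa using congrFun (congrFun ((mem_so n R A).1 hA) i) j
  simp only [trace, diag, mul_apply, ← Finset.sum_neg_distrib]
  exact Finset.sum_congr rfl fun i _ => Finset.sum_congr rfl fun j _ => by rw [hji i j]; ring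

variable [LinearOrder R] [IsStrictOrderedRing R]

theorem Matrix.trace_mul_self_nonpos {A : Matrix n n R} (hA : A ∈ so n R) :
    trace (A * A) ≤ 0 := by
  rw [trace_mul_self_eq_neg_sum_sq hA, neg_nonpos]
  exact Finset.sum_nonneg fun i _ => Finset.sum_nonneg fun j _ => sq_nonneg _

theorem Matrix.trace_mul_self_eq_zero_iff {A : Matrix n n R} (hA : A ∈ so n R) :
    trace (A * A) = 0 ↔ A = 0 := by
  rw [trace_mul_self_eq_neg_sum_sq hA, neg_eq_zero]
  refine ⟨fun h => ?_, fun h => by simp [h]⟩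
  ext i j
  have hi := (Finset.sum_eq_zero_iff_of_nonneg fun i _ => Finset.sum_nonneg fun j _ =>
    sq_nonneg (A i j)).1 h i (Finset.mem_univ i)
  exact pow_eq_zero_iff two_ne_zero |>.1 <|
    (Finset.sum_eq_zero_iff_of_nonneg fun j _ => sq_nonneg (A i j)).1 hi j (Finset.mem_univ j)

theorem Matrix.lie_mem_of_so_le_sup {L V : Submodule R (Matrix n n R)}
    (hL : L ≤ (so n R).toSubmodule) (hsup : (so n R).toSubmodule ≤ L ⊔ V)
    (horth : ∀ A ∈ L, ∀ B ∈ V, trace (A * B) = 0) (hinv : ∀ A ∈ L, ∀ B ∈ V, ⁅A, B⁆ ∈ V)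
    {A B : Matrix n n R} (hA : A ∈ L) (hB : B ∈ L) : ⁅A, B⁆ ∈ L := by
  have hAB : ⁅A, B⁆ ∈ so n R := (so n R).lie_mem (hL hA) (hL hB)
  obtain ⟨P, hP, Q, hQ, hPQ⟩ := mem_sup.1 (hsup hAB)
  have hQ' : Q = ⁅A, B⁆ - P := eq_sub_of_add_eq' hPQ
  have hQso : Q ∈ so n R := hQ' ▸ (so n R).sub_mem hAB (hL hP)
  -- `Q` is trace-orthogonal to `P` by assumption, and to `⁅A, B⁆` by invariance.
  have hQQ : trace (Q * Q) = 0 := by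
    nth_rewrite 1 [hQ']
    rw [sub_mul, trace_sub, trace_lie_mul, horth _ hA _ (hinv _ hB _ hQ), horth _ hP _ hQ,
      sub_zero]
  rw [← hPQ, (trace_mul_self_eq_zero_iff hQso).1 hQQ, add_zero]
  exact hP

end TraceForm

section OrthogonalFamily

variable {n R ι : Type*} [Fintype n] [DecidableEq n] [Field R] [Fintype ι] [DecidableEq ι]
  {v : ι → Matrix n n R} {c : R}

theorem Matrix.trace_mul_sum_smul_of_orthogonal
    (hv : ∀ i j, trace (v i * v j) = if i = j then c else 0) (g : ι → R) (j : ι) :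
    trace (v j * ∑ i, g i • v i) = g j * c := by
  simp [Finset.mul_sum, trace_sum, trace_smul, hv]

theorem Matrix.linearIndependent_of_orthogonal (hc : c ≠ 0)
    (hv : ∀ i j, trace (v i * v j) = if i = j then c else 0) : LinearIndependent R v := by
  refine Fintype.linearIndependent_iff.2 fun g hg j => ?_
  have := trace_mul_sum_smul_of_orthogonal hv g j
  rw [hg, mul_zero, trace_zero] at this
  exact (mul_eq_zero.1 this.symm).resolve_right hc

theorem LieSubalgebra.killingForm_eq_sum_trace_of_orthogonal (hc : c ≠ 0)
    (hv : ∀ i j, trace (v i * v j) = if i = j then c else 0) (L : LieSubalgebra R (Matrix n n R))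
    (hL : L.toSubmodule = span R (Set.range v)) (x y : L) :
    killingForm R L x y =
      c⁻¹ * ∑ j, trace (v j * ⁅(x : Matrix n n R), ⁅(y : Matrix n n R), v j⁆⁆) := by
  have hvL (i : ι) : v i ∈ L := by
    change v i ∈ L.toSubmodule
    rw [hL]
    exact subset_span ⟨i, rfl⟩
  have hli : LinearIndependent R fun i => (⟨v i, hvL i⟩ : L) :=
    LinearIndependent.of_comp L.toSubmodule.subtype (linearIndependent_of_orthogonal hc hv)
  have hsp : ⊤ ≤ span R (Set.range fun i => (⟨v i, hvL i⟩ : L)) := by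
    rintro z -
    have hz : (z : Matrix n n R) ∈ span R (Set.range v) := hL ▸ z.2
    obtain ⟨g, hg⟩ := (mem_span_range_iff_exists_fun R).1 hz
    exact (mem_span_range_iff_exists_fun R).2 ⟨g, Subtype.ext (by simpa using hg)⟩
  set b := Module.Basis.mk hli hsp
  have hcoord (z : L) (j : ι) : b.repr z j = c⁻¹ * trace (v j * (z : Matrix n n R)) := by
    have hz := congrArg (fun z : L => (z : Matrix n n R)) (b.sum_repr z)
    simp only [b, Module.Basis.mk_apply, AddSubmonoidClass.coe_finsetSum, SetLike.val_smul] at hz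
    rw [← hz, trace_mul_sum_smul_of_orthogonal hv, mul_comm c⁻¹, mul_inv_cancel_right₀ hc]
  rw [killingForm_apply_apply, LinearMap.trace_eq_matrix_trace R b, Matrix.trace, Finset.mul_sum]
  refine Finset.sum_congr rfl fun j _ => ?_
  rw [diag_apply, LinearMap.toMatrix_apply, hcoord]
  simp [b]

theorem LieSubalgebra.killingForm_self_neg_of_orthogonal [LinearOrder R] [IsStrictOrderedRing R]
    (hc : c < 0) (hv : ∀ i j, trace (v i * v j) = if i = j then c else 0)
    (hso : ∀ i, v i ∈ so n R) (L : LieSubalgebra R (Matrix n n R))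
    (hL : L.toSubmodule = span R (Set.range v))
    (hcent : ∀ A ∈ L, (∀ j, ⁅A, v j⁆ = 0) → A = 0) {x : L} (hx : x ≠ 0) :
    killingForm R L x x < 0 := by
  have hxso : (x : Matrix n n R) ∈ so n R := by
    have hx' : (x : Matrix n n R) ∈ span R (Set.range v) := hL ▸ x.2
    exact span_le.2 (Set.range_subset_iff.2 hso) hx'
  have hmem (j : ι) : ⁅(x : Matrix n n R), v j⁆ ∈ so n R := (so n R).lie_mem hxso (hso j)
  have hterm (j : ι) : trace (v j * ⁅(x : Matrix n n R), ⁅(x : Matrix n n R), v j⁆⁆) =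
      -trace (⁅(x : Matrix n n R), v j⁆ * ⁅(x : Matrix n n R), v j⁆) := by
    rw [← trace_lie_mul, ← lie_skew, neg_mul, trace_neg]
  obtain ⟨j, hj⟩ : ∃ j, ⁅(x : Matrix n n R), v j⁆ ≠ 0 := by
    by_contra! h
    exact hx (Subtype.ext (hcent _ x.2 h))
  rw [killingForm_eq_sum_trace_of_orthogonal hc.ne hv L hL]
  refine mul_neg_of_neg_of_pos (inv_lt_zero.2 hc)
    (Finset.sum_pos' (fun i _ => ?_) ⟨j, Finset.mem_univ j, ?_⟩)
  · rw [hterm, neg_nonneg]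
    exact trace_mul_self_nonpos (hmem i)
  · rw [hterm, neg_pos]
    exact (trace_mul_self_nonpos (hmem j)).lt_of_ne
      (mt (trace_mul_self_eq_zero_iff (hmem j)).1 hj)

end OrthogonalFamily

def E7Int (i j : Fin 7) : Matrix (Fin 7) (Fin 7) ℤ := single i j 1

def g2Int : Fin 14 → Matrix (Fin 7) (Fin 7) ℤ :=
  ![-E7Int 3 6 - E7Int 4 5 + E7Int 5 4 + E7Int 6 3,
    E7Int 3 5 - E7Int 4 6 - E7Int 5 3 + E7Int 6 4,
    -E7Int 3 4 + E7Int 4 3 - E7Int 5 6 + E7Int 6 5,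
    E7Int 1 6 + E7Int 2 5 - E7Int 5 2 - E7Int 6 1,
    -E7Int 1 5 + E7Int 2 6 + E7Int 5 1 - E7Int 6 2,
    E7Int 1 4 - E7Int 2 3 + E7Int 3 2 - E7Int 4 1,
    -E7Int 1 3 - E7Int 2 4 + E7Int 3 1 + E7Int 4 2,
    -(2 : ℤ) • E7Int 1 2 + (2 : ℤ) • E7Int 2 1 + E7Int 3 4 - E7Int 4 3 - E7Int 5 6 + E7Int 6 5,
    -(2 : ℤ) • E7Int 0 1 + (2 : ℤ) • E7Int 1 0 + E7Int 3 6 - E7Int 4 5 + E7Int 5 4 - E7Int 6 3,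
    -(2 : ℤ) • E7Int 0 2 + (2 : ℤ) • E7Int 2 0 - E7Int 3 5 - E7Int 4 6 + E7Int 5 3 + E7Int 6 4,
    -(2 : ℤ) • E7Int 0 3 - E7Int 1 6 + E7Int 2 5 + (2 : ℤ) • E7Int 3 0 - E7Int 5 2 + E7Int 6 1,
    -(2 : ℤ) • E7Int 0 4 + E7Int 1 5 + E7Int 2 6 + (2 : ℤ) • E7Int 4 0 - E7Int 5 1 - E7Int 6 2,
    -(2 : ℤ) • E7Int 0 5 - E7Int 1 4 - E7Int 2 3 + E7Int 3 2 + E7Int 4 1 + (2 : ℤ) • E7Int 5 0,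
    -(2 : ℤ) • E7Int 0 6 + E7Int 1 3 - E7Int 2 4 - E7Int 3 1 + E7Int 4 2 + (2 : ℤ) • E7Int 6 0]

/-- The matrix of `u ↦ e c × u`, for the cross product on `ℝ⁷` (basis indexed from `0`) with
`e i × e j = e k` whenever `(i, j, k)` is a cyclic rotation of one of `(0,1,2)`, `(0,3,4)`,
`(0,6,5)`, `(1,3,5)`, `(1,4,6)`, `(2,3,6)`, `(2,5,4)`: the orientation of the Fano plane for which
the `g2C k` are derivations. -/
def crossMatrix : Fin 7 → Matrix (Fin 7) (Fin 7) ℤ :=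
  ![E7Int 2 1 - E7Int 1 2 + E7Int 4 3 - E7Int 3 4 + E7Int 5 6 - E7Int 6 5,
    E7Int 0 2 - E7Int 2 0 + E7Int 5 3 - E7Int 3 5 + E7Int 6 4 - E7Int 4 6,
    E7Int 1 0 - E7Int 0 1 + E7Int 6 3 - E7Int 3 6 + E7Int 4 5 - E7Int 5 4,
    E7Int 0 4 - E7Int 4 0 + E7Int 1 5 - E7Int 5 1 + E7Int 2 6 - E7Int 6 2,
    E7Int 3 0 - E7Int 0 3 + E7Int 1 6 - E7Int 6 1 + E7Int 5 2 - E7Int 2 5,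
    E7Int 6 0 - E7Int 0 6 + E7Int 3 1 - E7Int 1 3 + E7Int 2 4 - E7Int 4 2,
    E7Int 0 5 - E7Int 5 0 + E7Int 4 1 - E7Int 1 4 + E7Int 3 2 - E7Int 2 3]

theorem g2Int_transpose (k : Fin 14) : (g2Int k)ᵀ = -g2Int k := by
  revert k
  decide +kernel

theorem trace_g2Int_mul_g2Int (i j : Fin 14) :
    trace (g2Int i * g2Int j) = if i = j then (if i < 7 then -4 else -12) else 0 := by
  revert i j
  simp only [trace, diag, Matrix.mul_apply, Fin.sum_univ_seven]
  decide +kernel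

theorem trace_g2Int_mul_crossMatrix (k : Fin 14) (c : Fin 7) :
    trace (g2Int k * crossMatrix c) = 0 := by
  revert k c
  simp only [trace, diag, Matrix.mul_apply, Fin.sum_univ_seven]
  decide +kernel

theorem lie_g2Int_crossMatrix (k : Fin 14) (c : Fin 7) :
    ⁅g2Int k, crossMatrix c⁆ = ∑ d, g2Int k d c • crossMatrix d := by
  revert k c
  simp only [← Matrix.ext_iff, Ring.lie_def, Matrix.add_apply, Matrix.sub_apply, Matrix.mul_apply,
    Matrix.smul_apply, Fin.sum_univ_seven, smul_eq_mul]
  decide +kernel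

/-- The completeness relation of the orthogonal basis of `so(7)` formed by the `g2Int k`, of
squared norms `4` and `12`, and the `crossMatrix c`, of squared norm `6`. -/
theorem six_smul_E7Int_sub_E7Int (a b : Fin 7) :
    (6 : ℤ) • (E7Int a b - E7Int b a) =
      ∑ k, ((if k < 7 then 3 else 1) * g2Int k a b) • g2Int k +
        ∑ c, (2 * crossMatrix c a b) • crossMatrix c := by
  revert a b
  simp only [← Matrix.ext_iff, Matrix.add_apply, Matrix.sub_apply, Matrix.sum_apply,
    Matrix.smul_apply, Fin.sum_univ_succ, smul_eq_mul]
  decide +kernel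

local notation "castℝ" => RingHom.mapMatrix (Int.castRingHom ℝ)

theorem castℝ_E7Int (i j : Fin 7) : castℝ (E7Int i j) = E7 i j := by
  simp only [E7Int, E7, RingHom.mapMatrix_apply, map_single, map_one]

section IntCast

variable {n : Type*} [Fintype n] [DecidableEq n]

theorem castℝ_lie (A B : Matrix n n ℤ) : castℝ ⁅A, B⁆ = ⁅castℝ A, castℝ B⁆ := by
  simp only [Ring.lie_def, map_sub, map_mul]

theorem trace_castℝ (A : Matrix n n ℤ) : trace (castℝ A) = ((trace A : ℤ) : ℝ) := by
  rw [RingHom.mapMatrix_apply, ← AddMonoidHom.map_trace (Int.castRingHom ℝ)]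
  rfl

theorem castℝ_mem_so {A : Matrix n n ℤ} (hA : Aᵀ = -A) : castℝ A ∈ so n ℝ := by
  rw [mem_so, RingHom.mapMatrix_apply, ← transpose_map, hA, ← RingHom.mapMatrix_apply, map_neg]
  rfl

end IntCast

noncomputable def g2Scale (k : Fin 14) : ℝ := if k < 7 then 1 else 1 / Real.sqrt 3

theorem g2Scale_ne_zero (k : Fin 14) : g2Scale k ≠ 0 := by
  unfold g2Scale
  split_ifs <;> positivity

theorem g2C_eq_smul (k : Fin 14) : g2C k = g2Scale k • castℝ (g2Int k) := by
  fin_cases k <;>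
    simp [g2C, g2Int, g2Scale, castℝ_E7Int, two_smul, -RingHom.mapMatrix_apply, -zsmul_eq_mul]

theorem g2C_mem_so (k : Fin 14) : g2C k ∈ so (Fin 7) ℝ := by
  rw [g2C_eq_smul]
  exact (so (Fin 7) ℝ).smul_mem _ (castℝ_mem_so (g2Int_transpose k))

theorem trace_g2C_mul_g2C (i j : Fin 14) :
    trace (g2C i * g2C j) = if i = j then -4 else 0 := by
  rw [g2C_eq_smul, g2C_eq_smul, smul_mul_smul_comm, trace_smul, ← map_mul, trace_castℝ,
    trace_g2Int_mul_g2Int]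
  split_ifs with hij hi
  · subst hij
    simp [g2Scale, hi]
  · subst hij
    have h3 : Real.sqrt 3 * Real.sqrt 3 = 3 := Real.mul_self_sqrt (by norm_num)
    simp only [g2Scale, hi, if_false, smul_eq_mul]
    field_simp
    push_cast
    linarith
  · simp

theorem trace_g2C_mul_crossMatrix (k : Fin 14) (c : Fin 7) :
    trace (g2C k * castℝ (crossMatrix c)) = 0 := by
  rw [g2C_eq_smul, smul_mul_assoc, trace_smul, ← map_mul, trace_castℝ,
    trace_g2Int_mul_crossMatrix, Int.cast_zero, smul_zero]

theorem lie_g2C_crossMatrix_mem (k : Fin 14) (c : Fin 7) :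
    ⁅g2C k, castℝ (crossMatrix c)⁆ ∈ span ℝ (Set.range fun d => castℝ (crossMatrix d)) := by
  rw [g2C_eq_smul, smul_lie, ← castℝ_lie, lie_g2Int_crossMatrix, map_sum]
  exact smul_mem _ _ (sum_mem fun d _ => by
    rw [map_zsmul]
    exact zsmul_mem (subset_span (Set.mem_range_self d)) _)

theorem so_le_span_g2C_sup :
    (so (Fin 7) ℝ).toSubmodule ≤
      span ℝ (Set.range g2C) ⊔ span ℝ (Set.range fun c => castℝ (crossMatrix c)) := by
  have hbasic (a b : Fin 7) : E7 a b - E7 b a ∈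
      span ℝ (Set.range g2C) ⊔ span ℝ (Set.range fun c => castℝ (crossMatrix c)) := by
    have h := congrArg castℝ (six_smul_E7Int_sub_E7Int a b)
    simp only [map_zsmul, map_sub, map_add, map_sum, castℝ_E7Int] at h
    have h6 : E7 a b - E7 b a = (6 : ℝ)⁻¹ • ((6 : ℤ) • (E7 a b - E7 b a)) := by
      rw [← Int.cast_smul_eq_zsmul ℝ, smul_smul]
      norm_num
    rw [h6, h]
    refine smul_mem _ _ (add_mem (mem_sup_left (sum_mem fun k _ => zsmul_mem ?_ _))
      (mem_sup_right (sum_mem fun c _ => zsmul_mem (subset_span (Set.mem_range_self c)) _)))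
    rw [← inv_smul_smul₀ (g2Scale_ne_zero k) (castℝ (g2Int k)), ← g2C_eq_smul]
    exact smul_mem _ _ (subset_span (Set.mem_range_self k))
  intro A hA
  have hskew : A = (2 : ℝ)⁻¹ • ∑ a, ∑ b, A a b • (E7 a b - E7 b a) := by
    ext i j
    have hji := congrFun (congrFun ((mem_so _ _ A).1 hA) j) i
    simp only [transpose_apply, Matrix.neg_apply] at hji
    simp [E7, Matrix.sum_apply, single_apply, mul_sub, Finset.sum_sub_distrib, ite_and, hji]
    ring
  rw [hskew]
  exact smul_mem _ _ (sum_mem fun a _ => sum_mem fun b _ => smul_mem _ _ (hbasic a b))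

theorem eq_zero_of_forall_lie_g2C_eq_zero {A : Matrix (Fin 7) (Fin 7) ℝ}
    (hA : A ∈ so (Fin 7) ℝ) (h : ∀ k, ⁅A, g2C k⁆ = 0) : A = 0 := by
  have hcomm (k : Fin 14) (i : Fin 7) :
      ∑ l, A i l * g2Int k l 0 = ∑ l, (g2Int k i l : ℝ) * A l 0 := by
    have hk := h k
    rw [g2C_eq_smul, lie_smul, smul_eq_zero, Ring.lie_def, sub_eq_zero] at hk
    simpa [mul_apply] using congrFun (congrFun (hk.resolve_left (g2Scale_ne_zero k)) i) 0
  -- `g2C 0` and `g2C 3` kill `e 0` and their common kernel is `ℝ e 0`, so `A (e 0) ∈ ℝ e 0`.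
  have hcol0 (i : Fin 7) : A i 0 = 0 := by
    have h00 : A 0 0 = 0 := by
      have := congrFun (congrFun ((mem_so _ _ A).1 hA) 0) 0
      simp only [transpose_apply, Matrix.neg_apply] at this
      linarith
    have h0 := hcomm 0
    have h3 := hcomm 3
    simp [Fin.sum_univ_seven, g2Int, E7Int, single_apply, Fin.forall_fin_succ] at h0 h3
    fin_cases i <;> simp <;> linarith
  -- `g2C 8, …, g2C 13` map `e 0` to nonzero multiples of `e 1, …, e 6`.
  ext i j
  have hk := fun k => hcomm k i
  simp [Fin.sum_univ_seven, g2Int, E7Int, hcol0, Fin.forall_fin_succ] at hk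
  fin_cases j <;> simp [hcol0] <;> linarith

/-- The fourteen matrices `C₁,…,C₁₄` are linearly independent,
their span is closed under the matrix commutator (hence is a 14-dimensional real
Lie algebra, the compact form `g₂` in its 7-dimensional representation), and the
Killing form of this Lie algebra is negative definite. -/
theorem g2_matrices_lie_algebra :
    LinearIndependent ℝ g2C ∧
    (∀ x ∈ Submodule.span ℝ (Set.range g2C), ∀ y ∈ Submodule.span ℝ (Set.range g2C),
        ⁅x, y⁆ ∈ Submodule.span ℝ (Set.range g2C)) ∧
    (∀ L : LieSubalgebra ℝ (Matrix (Fin 7) (Fin 7) ℝ),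
        L.toSubmodule = Submodule.span ℝ (Set.range g2C) →
        ∀ x : L, x ≠ 0 → killingForm ℝ L x x < 0) := by
  have hso : span ℝ (Set.range g2C) ≤ (so (Fin 7) ℝ).toSubmodule :=
    span_le.2 (Set.range_subset_iff.2 g2C_mem_so)
  have horth : ∀ A ∈ span ℝ (Set.range g2C),
      ∀ B ∈ span ℝ (Set.range fun c => castℝ (crossMatrix c)), trace (A * B) = 0 :=
    fun A hA B hB => trace_mul_eq_zero_of_mem_span
      (by rintro _ ⟨k, rfl⟩ _ ⟨c, rfl⟩; exact trace_g2C_mul_crossMatrix k c) hA hB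
  have hinv : ∀ A ∈ span ℝ (Set.range g2C),
      ∀ B ∈ span ℝ (Set.range fun c => castℝ (crossMatrix c)),
        ⁅A, B⁆ ∈ span ℝ (Set.range fun c => castℝ (crossMatrix c)) :=
    fun A hA B hB => lie_mem_of_mem_span
      (by rintro _ ⟨k, rfl⟩ _ ⟨c, rfl⟩; exact lie_g2C_crossMatrix_mem k c) hA hB
  refine ⟨linearIndependent_of_orthogonal (by norm_num) trace_g2C_mul_g2C,
    fun x hx y hy => lie_mem_of_so_le_sup hso so_le_span_g2C_sup horth hinv hx hy,
    fun L hL x hx => LieSubalgebra.killingForm_self_neg_of_orthogonal (by norm_num)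
      trace_g2C_mul_g2C g2C_mem_so L hL (fun A hA h => ?_) hx⟩
  exact eq_zero_of_forall_lie_g2C_eq_zero (hso (hL ▸ hA)) h
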